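/- arXiv:2501.05123 — 3 statements merged into one kernel-verified Lean document; each statement's English description precedes it below -/
import Mathlib

section
/- Let n ≥ 3 and let D be a nonempty set of integers, each of which occurs as a finite directed distance between some pair of vertices of an oriented cycle C⃗_n. If (n−1) ∈ D and C⃗_n is D-antimagic, then C⃗_n is unidirectional. -/
open scoped Classical

/-- There is a directed walk of length `k` from `u` to `v` in the digraph with arc relation `A`. -/
def WalkLen {V : Type*} (A : V → V → Prop) : ℕ → V → V → Prop
  | 0, u, v => u = v
  | k + 1, u, v => ∃ w, A u w ∧ WalkLen A k w v

/-- The directed distance from `u` to `v` is exactly `k`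
(i.e. `k` is the length of a shortest directed path from `u` to `v`). -/
def HasDist {V : Type*} (A : V → V → Prop) (u v : V) (k : ℕ) : Prop :=
  WalkLen A k u v ∧ ∀ m < k, ¬ WalkLen A m u v

/-- `y` belongs to the `D`-neighborhood of `v`: the distance from `v` to `y` lies in `D`. -/
def InDNbhd {V : Type*} (A : V → V → Prop) (D : Set ℕ) (v y : V) : Prop :=
  ∃ k ∈ D, HasDist A v y k

/-- The `D`-weight of `v` under the labeling `f`: the sum of labels of the `D`-neighbors. -/
noncomputable def dWeight {V : Type*} [Fintype V] (A : V → V → Prop) (D : Set ℕ)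
    (f : V → ℕ) (v : V) : ℕ :=
  ∑ y : V, if InDNbhd A D v y then f y else 0

/-- The digraph `(V, A)` is `D`-antimagic: some bijective labeling of the vertices by
`1, …, |V|` gives pairwise distinct `D`-weights. -/
def DAntimagic (V : Type*) [Fintype V] (A : V → V → Prop) (D : Set ℕ) : Prop :=
  ∃ f : V ≃ Fin (Fintype.card V),
    Function.Injective fun v => dWeight A D (fun y => (f y : ℕ) + 1) v

/-- The orientation of the cycle `C_n` determined by `σ`: the edge between vertex `i` and
vertex `(i+1) mod n` is directed `i → i+1` when `σ i = true`, and `i+1 → i` otherwise. -/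
def cycleArc (n : ℕ) (σ : Fin n → Bool) (u v : Fin n) : Prop :=
  (σ u = true ∧ (v : ℕ) = ((u : ℕ) + 1) % n) ∨
  (σ v = false ∧ (u : ℕ) = ((v : ℕ) + 1) % n)

/-- The arc relation of the unidirectional oriented cycle `C⃗_n`: arcs `i → (i+1) mod n`. -/
def uniArc (n : ℕ) (u v : Fin n) : Prop :=
  (v : ℕ) = ((u : ℕ) + 1) % n

/-- An orientation of `C_n` is unidirectional if all edges are directed the same way around. -/
def Unidirectional (n : ℕ) (σ : Fin n → Bool) : Prop :=
  (∀ i, σ i = true) ∨ (∀ i, σ i = false)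

/-- A sink: a vertex of out-degree 0. -/
def IsSink {V : Type*} (A : V → V → Prop) (u : V) : Prop :=
  ∀ v, ¬ A u v

/-- A source: a vertex of in-degree 0. -/
def IsSource {V : Type*} (A : V → V → Prop) (u : V) : Prop :=
  ∀ v, ¬ A v u

/-- A digraph is Θ-oriented if it has exactly one sink and exactly one source, and
they are adjacent (so the arc between them goes from the source to the sink). -/
def ThetaOriented {V : Type*} (A : V → V → Prop) : Prop :=
  ∃ s t, IsSink A s ∧ IsSource A t ∧ (∀ u, IsSink A u → u = s) ∧
    (∀ u, IsSource A u → u = t) ∧ A t s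

/-- The arc relation of the Θ-oriented cycle on `Fin n`:
arcs `i → i+1` for `0 ≤ i ≤ n-2`, together with the arc `0 → n-1`. -/
def thetaArc (n : ℕ) (u v : Fin n) : Prop :=
  ((v : ℕ) = (u : ℕ) + 1) ∨ ((u : ℕ) = 0 ∧ (v : ℕ) = n - 1)

/-- The arc relation of a disjoint union of `c` oriented cycles, the `j`-th component having
`len j` vertices and arc relation `A j`. -/
def unionArc (c : ℕ) (len : Fin c → ℕ)
    (A : ∀ j, Fin (len j) → Fin (len j) → Prop)
    (u v : Σ j, Fin (len j)) : Prop :=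
  ∃ h : u.1 = v.1, A v.1 (Fin.cast (congrArg len h) u.2) v.2

section Aux

open Fin.CommRing

variable {n : ℕ} {σ : Fin n → Bool}

lemma arc_iff [NeZero n] (u v : Fin n) :
    cycleArc n σ u v ↔ (σ u = true ∧ v = u + 1) ∨ (σ v = false ∧ u = v + 1) := by
  have key : ∀ a b : Fin n, ((a : ℕ) = ((b : ℕ) + 1) % n) ↔ a = b + 1 := by
    intro a b
    rw [Fin.ext_iff]
    simp [Fin.add_def, Fin.val_one', Nat.add_mod_mod]
  unfold cycleArc
  rw [key, key]

lemma walk_mono [NeZero n] (hn : 3 ≤ n) :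
    ∀ k, 1 ≤ k → ∀ u v : Fin n, WalkLen (cycleArc n σ) k u v →
      ((∀ i < k, σ (u + (i : ℕ)) = true) ∧ v = u + (k : ℕ)) ∨
      ((∀ i < k, σ (v + (i : ℕ)) = false) ∧ u = v + (k : ℕ)) := by
  intro k
  induction k with
  | zero => omega
  | succ k ih =>
    intro _ u v hw
    obtain ⟨w, harc, hw'⟩ := hw
    rw [arc_iff] at harc
    rcases Nat.eq_zero_or_pos k with hk0 | hk1
    · subst hk0
      -- walk of length 1 : w = v
      have hwv : w = v := hw'
      subst hwv
      rcases harc with ⟨hσ, hv⟩ | ⟨hσ, hu⟩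
      · left
        refine ⟨?_, by rw [hv]; push_cast; ring⟩
        intro i hi
        interval_cases i
        simpa using hσ
      · right
        refine ⟨?_, by rw [hu]; push_cast; ring⟩
        intro i hi
        interval_cases i
        simpa using hσ
    · rcases ih hk1 w v hw' with ⟨hall, hvw⟩ | ⟨hall, hwv⟩
      · rcases harc with ⟨hσ, hwu⟩ | ⟨hσ, huw⟩
        · -- forward then forward
          left
          constructor
          · intro i hi
            rcases Nat.eq_zero_or_pos i with h0 | h1
            · subst h0; simpa using hσ
            · obtain ⟨j, rfl⟩ := Nat.exists_eq_add_of_le h1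
              have : u + ((1 + j : ℕ) : Fin n) = w + (j : ℕ) := by
                rw [hwu]; push_cast; ring
              rw [this]
              exact hall j (by omega)
          · rw [hvw, hwu]; push_cast; ring
        · -- backward arc, IH forward: σ w both true and false
          have := hall 0 hk1
          simp only [Nat.cast_zero, add_zero] at this
          rw [hσ] at this
          exact absurd this (by simp)
      · rcases harc with ⟨hσ, hwu⟩ | ⟨hσ, huw⟩
        · -- forward arc, IH backward: contradiction at u
          have hu : u = v + ((k - 1 : ℕ) : Fin n) := by
            have hk : ((k : ℕ) : Fin n) = ((k - 1 : ℕ) : Fin n) + 1 := by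
              rw [← Nat.cast_one (R := Fin n), ← Nat.cast_add]
              congr 1; omega
            have h2 : u + 1 = v + ((k - 1 : ℕ) : Fin n) + 1 := by
              rw [← hwu, hwv, hk]; ring
            exact add_right_cancel h2
          have hf := hall (k - 1) (by omega)
          rw [← hu] at hf
          rw [hσ] at hf
          exact absurd hf (by simp)
        · -- backward then backward
          right
          constructor
          · intro i hi
            rcases Nat.lt_or_ge i k with h | h
            · exact hall i h
            · have : i = k := by omega
              subst this
              rw [← hwv]
              exact hσ
          · rw [huw, hwv]; push_cast; ring
      

lemma all_eq_of_dist [NeZero n] (hn : 3 ≤ n) {u v : Fin n}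
    (hd : HasDist (cycleArc n σ) u v (n - 1)) : Unidirectional n σ := by
  have hn1 : 1 ≤ n - 1 := by omega
  rcases walk_mono hn (n - 1) hn1 u v hd.1 with ⟨hall, hv⟩ | ⟨hall, hu⟩
  · -- forward: all true except possibly u + (n-1); minimality handles that one
    have hlast : σ (u + ((n - 1 : ℕ) : Fin n)) = true := by
      by_contra h
      have hσf : σ v = false := by
        rw [hv]; exact Bool.not_eq_true _ ▸ (by simpa using h)
      have harc : cycleArc n σ u v := by
        rw [arc_iff]
        right
        refine ⟨hσf, ?_⟩
        rw [hv]
        have h0 : ((n - 1 : ℕ) : Fin n) + 1 = 0 := by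
          rw [← Nat.cast_one (R := Fin n), ← Nat.cast_add,
            show n - 1 + 1 = n by omega, Fin.natCast_self]
        rw [add_assoc, h0, add_zero]
      have hw1 : WalkLen (cycleArc n σ) 1 u v := ⟨v, harc, rfl⟩
      exact hd.2 1 (by omega) hw1
    left
    intro j
    set i := (j - u).val with hi
    have hj : j = u + (i : ℕ) := by
      rw [hi, Fin.cast_val_eq_self]
      ring
    rcases Nat.lt_or_ge i (n - 1) with h | h
    · rw [hj]; exact hall i h
    · have : i = n - 1 := by have := (j - u).isLt; omega
      rw [hj, this]; exact hlast
  · -- backward: all false except possibly u itself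
    have hlast : σ u = false := by
      by_contra h
      have hσt : σ u = true := by simpa using h
      have harc : cycleArc n σ u v := by
        rw [arc_iff]
        left
        refine ⟨hσt, ?_⟩
        rw [hu]
        have h0 : ((n - 1 : ℕ) : Fin n) + 1 = 0 := by
          rw [← Nat.cast_one (R := Fin n), ← Nat.cast_add,
            show n - 1 + 1 = n by omega, Fin.natCast_self]
        rw [add_assoc, h0, add_zero]
      have hw1 : WalkLen (cycleArc n σ) 1 u v := ⟨v, harc, rfl⟩
      exact hd.2 1 (by omega) hw1
    right
    intro j
    set i := (j - v).val with hi
    have hj : j = v + (i : ℕ) := by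
      rw [hi, Fin.cast_val_eq_self]
      ring
    rcases Nat.lt_or_ge i (n - 1) with h | h
    · rw [hj]; exact hall i h
    · have hieq : i = n - 1 := by have := (j - v).isLt; omega
      have : j = u := by
        rw [hj, hieq, hu]
      rw [this]; exact hlast

end Aux

/-- If `D` is a distance set of an oriented cycle `C⃗_n` with `n - 1 ∈ D`
and `C⃗_n` is `D`-antimagic, then `C⃗_n` is unidirectional. -/
theorem antimagic_of_nSubOne_mem_unidirectional (n : ℕ) (hn : 3 ≤ n) (σ : Fin n → Bool)
    (D : Set ℕ) (hD : D.Nonempty)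
    (hocc : ∀ d ∈ D, ∃ u v : Fin n, HasDist (cycleArc n σ) u v d)
    (hmem : n - 1 ∈ D)
    (hanti : DAntimagic (Fin n) (cycleArc n σ) D) :
    Unidirectional n σ := by
  haveI : NeZero n := ⟨by omega⟩
  obtain ⟨u, v, hd⟩ := hocc (n - 1) hmem
  exact all_eq_of_dist hn hd
end

section
/- Let n ≥ 3 and let x be a positive divisor of n with x < n. If D = {(cx) mod n : c a positive integer} (the set of multiples of x reduced modulo n), then the unidirectional oriented cycle C⃗_n is not D-antimagic; indeed, the vertices v_1 and v_{1+x} have the same D-neighborhood, hence equal D-weights under every bijective labeling. -/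
open scoped Classical

/-!
In `C⃗_n` the distance from `u` to `v` is the residue of `v - u` in `[0, n)`, and for `x ∣ n`
the distance set `D` consists exactly of the multiples of `x` in `[0, n)`. Since `x ∣ n`,
divisibility of `v - u` by `x` only depends on `u` modulo `x`, and `v_1`, `v_{1+x}` differ by `x`.
-/

section General

variable {V : Type*} (A : V → V → Prop) (D : Set ℕ)

theorem dWeight_eq_of_inDNbhd_iff [Fintype V] (f : V → ℕ) {u w : V}
    (h : ∀ y, InDNbhd A D u y ↔ InDNbhd A D w y) : dWeight A D f u = dWeight A D f w :=
  Finset.sum_congr rfl fun y _ => if_congr (h y) rfl rfl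

theorem not_dAntimagic_of_inDNbhd_iff [Fintype V] {u w : V} (hne : u ≠ w)
    (h : ∀ y, InDNbhd A D u y ↔ InDNbhd A D w y) : ¬ DAntimagic V A D :=
  fun ⟨_, hinj⟩ => hne (hinj (dWeight_eq_of_inDNbhd_iff A D _ h))

end General

section UniCycle

open Fin.NatCast

variable {n : ℕ} [NeZero n]

theorem uniArc_iff (u v : Fin n) : uniArc n u v ↔ v = u + 1 := by
  rw [uniArc, Fin.ext_iff, Fin.val_add, Fin.val_one', Nat.add_mod_mod]

theorem walkLen_uniArc_iff (k : ℕ) (u v : Fin n) :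
    WalkLen (uniArc n) k u v ↔ v = u + (k : Fin n) := by
  induction k generalizing u with
  | zero => simp only [WalkLen, Nat.cast_zero, add_zero, eq_comm]
  | succ k ih =>
    simp only [WalkLen, uniArc_iff, ih, exists_eq_left, Nat.cast_succ, add_comm (k : Fin n),
      add_assoc]

theorem walkLen_uniArc_iff_mod (k : ℕ) (u v : Fin n) :
    WalkLen (uniArc n) k u v ↔ k % n = (v - u).val := by
  rw [walkLen_uniArc_iff, ← Fin.val_natCast, ← Fin.ext_iff, eq_sub_iff_add_eq', eq_comm]

theorem hasDist_uniArc_iff (u v : Fin n) (k : ℕ) :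
    HasDist (uniArc n) u v k ↔ k = (v - u).val := by
  have hlt : (v - u).val < n := (v - u).isLt
  simp only [HasDist, walkLen_uniArc_iff_mod]
  constructor
  · rintro ⟨hk, hmin⟩
    have hle : k ≤ (v - u).val := not_lt.mp fun h => hmin _ h (Nat.mod_eq_of_lt hlt)
    rwa [Nat.mod_eq_of_lt (hle.trans_lt hlt)] at hk
  · rintro rfl
    exact ⟨Nat.mod_eq_of_lt hlt, fun m hm hm' => by
      rw [Nat.mod_eq_of_lt (hm.trans hlt)] at hm'
      omega⟩

theorem inDNbhd_uniArc_iff (D : Set ℕ) (u v : Fin n) :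
    InDNbhd (uniArc n) D u v ↔ (v - u).val ∈ D := by
  simp only [InDNbhd, hasDist_uniArc_iff, exists_eq_right]

end UniCycle

theorem Nat.exists_pos_mul_mod_eq_iff {n x m : ℕ} (hn : 0 < n) (hdvd : x ∣ n) :
    (∃ c, 0 < c ∧ m = c * x % n) ↔ m < n ∧ x ∣ m := by
  constructor
  · rintro ⟨c, -, rfl⟩
    exact ⟨Nat.mod_lt _ hn, (Nat.dvd_mod_iff hdvd).mpr (dvd_mul_left x c)⟩
  · rintro ⟨hm, a, rfl⟩
    obtain ⟨b, rfl⟩ := hdvd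
    -- `c = a + b` gives `c * x = m + n`, and `b > 0` because `n > 0`.
    refine ⟨a + b, Nat.add_pos_right a (Nat.pos_of_mul_pos_left hn), ?_⟩
    rw [show (a + b) * x = x * a + x * b by ring, Nat.add_mod_right, Nat.mod_eq_of_lt hm]

theorem Fin.dvd_val_sub_iff {n x : ℕ} (hdvd : x ∣ n) {a b : Fin n} (hb : x ∣ b.val) :
    x ∣ (a - b).val ↔ x ∣ a.val := by
  rw [Fin.val_sub, Nat.dvd_mod_iff hdvd, Nat.dvd_add_right (Nat.dvd_sub hdvd hb)]

theorem inDNbhd_uniArc_multiples_iff {n x : ℕ} [NeZero n] (hdvd : x ∣ n) {u : Fin n}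
    (hu : x ∣ u.val) (v : Fin n) :
    InDNbhd (uniArc n) {m | ∃ c, 0 < c ∧ m = c * x % n} u v ↔ x ∣ v.val := by
  rw [inDNbhd_uniArc_iff, Set.mem_ofPred_eq, Nat.exists_pos_mul_mod_eq_iff (NeZero.pos n) hdvd,
    Fin.dvd_val_sub_iff hdvd hu, and_iff_right (Fin.isLt _)]

/-- If `x` is a positive divisor of `n` with `x < n` and
`D = {(c·x) mod n : c ≥ 1}`, then in the unidirectional `C⃗_n` the vertices `v_1` and
`v_{1+x}` have the same `D`-neighborhood, and `C⃗_n` is not `D`-antimagic. -/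
theorem divisor_distanceSet_not_antimagic (n x : ℕ)
    (hxn : x < n) (hdvd : x ∣ n) (D : Set ℕ)
    (hD : D = {m : ℕ | ∃ c : ℕ, 0 < c ∧ m = (c * x) % n}) :
    (∀ y : Fin n,
        InDNbhd (uniArc n) D (⟨0, by omega⟩ : Fin n) y ↔
          InDNbhd (uniArc n) D (⟨x, hxn⟩ : Fin n) y) ∧
      ¬ DAntimagic (Fin n) (uniArc n) D := by
  subst hD
  have : NeZero n := ⟨by omega⟩
  have hnbhd := fun y : Fin n =>
    (inDNbhd_uniArc_multiples_iff hdvd (u := ⟨0, by omega⟩) (dvd_zero x) y).trans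
      (inDNbhd_uniArc_multiples_iff hdvd (u := ⟨x, hxn⟩) dvd_rfl y).symm
  refine ⟨hnbhd, not_dAntimagic_of_inDNbhd_iff _ _ ?_ hnbhd⟩
  simpa [Fin.ext_iff] using (Nat.pos_of_dvd_of_pos hdvd (NeZero.pos n)).ne
end

section
/- Let n ≥ 3 and let D be a nonempty subset of {0,1,…,n−2}. The Θ-oriented cycle C⃗_n is D-antimagic if and only if min(D) ≤ 1. -/
open scoped Classical

/-!
Label vertex `i` of the Θ-oriented cycle by `n - i`. Away from the arc `0 → n-1`, the
`D`-neighbours of `i` are the vertices `i + d` with `d ∈ D`, so shifting by one maps the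
`D`-neighbourhood of `i + 1` injectively into that of `i` while raising every label by one;
as `i + min D` is a `D`-neighbour of `i` when `min D ≤ 1`, the weights strictly decrease along
the path `0 → 1 → ⋯ → n-1`. Conversely, if `0, 1 ∉ D`, the vertices `n-2` and `n-1` both have
empty `D`-neighbourhoods, hence equal weights under every labelling.
-/

open Finset

section General

variable {V : Type*} [Fintype V] {A : V → V → Prop} {D : Set ℕ}

theorem dWeight_eq_sum_filter (f : V → ℕ) (v : V) :
    dWeight A D f v = ∑ y ∈ univ.filter (InDNbhd A D v), f y :=
  (sum_filter _ _).symm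

theorem dWeight_congr_inDNbhd {u v : V} (h : ∀ y, InDNbhd A D u y ↔ InDNbhd A D v y)
    (f : V → ℕ) : dWeight A D f u = dWeight A D f v :=
  sum_congr rfl fun y _ => by rw [if_congr (h y) rfl rfl]

theorem DAntimagic.eq_of_inDNbhd_iff (hA : DAntimagic V A D) {u v : V}
    (h : ∀ y, InDNbhd A D u y ↔ InDNbhd A D v y) : u = v := by
  obtain ⟨f, hf⟩ := hA
  exact hf (dWeight_congr_inDNbhd h _)

theorem dWeight_lt_dWeight_of_injOn {f : V → ℕ} {v w : V} (e : V → V)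
    (he : Set.InjOn e {y | InDNbhd A D w y})
    (hmaps : ∀ y, InDNbhd A D w y → InDNbhd A D v (e y))
    (hlt : ∀ y, InDNbhd A D w y → f y < f (e y))
    (hpos : ∀ y, 0 < f y) (hv : ∃ y, InDNbhd A D v y) :
    dWeight A D f w < dWeight A D f v := by
  rw [dWeight_eq_sum_filter, dWeight_eq_sum_filter]
  rcases (univ.filter (InDNbhd A D w)).eq_empty_or_nonempty with hempty | hne
  · obtain ⟨y, hy⟩ := hv
    rw [hempty, sum_empty]
    exact sum_pos (fun y _ => hpos y) ⟨y, by simpa using hy⟩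
  · calc ∑ y ∈ univ.filter (InDNbhd A D w), f y
        < ∑ y ∈ univ.filter (InDNbhd A D w), f (e y) :=
          sum_lt_sum_of_nonempty hne fun y hy => hlt y (mem_filter.1 hy).2
      _ = ∑ y ∈ (univ.filter (InDNbhd A D w)).image e, f y :=
          (sum_image fun x hx y hy => he (mem_filter.1 hx).2 (mem_filter.1 hy).2).symm
      _ ≤ ∑ y ∈ univ.filter (InDNbhd A D v), f y := by
          refine sum_le_sum_of_subset (image_subset_iff.2 fun y hy => ?_)
          simpa using hmaps y (mem_filter.1 hy).2

end General

section Theta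

variable {n : ℕ}

theorem walkLen_thetaArc_iff (hn : 2 ≤ n) (k : ℕ) (u v : Fin n) :
    WalkLen (thetaArc n) k u v ↔
      (v : ℕ) = u + k ∨ (k = 1 ∧ (u : ℕ) = 0 ∧ (v : ℕ) = n - 1) := by
  induction k generalizing u with
  | zero =>
    simp only [WalkLen, Fin.ext_iff]
    omega
  | succ k ih =>
    simp only [WalkLen]
    constructor
    · rintro ⟨w, hw | hw, hwalk⟩ <;> rcases (ih w).1 hwalk with h | h <;> omega
    · rintro (h | ⟨hk, hu, hv⟩)
      · exact ⟨⟨u + 1, by omega⟩, Or.inl rfl, (ih _).2 (Or.inl (by simp only; omega))⟩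
      · exact ⟨v, Or.inr ⟨hu, hv⟩, (ih v).2 (Or.inl (by omega))⟩

theorem hasDist_thetaArc_iff (hn : 2 ≤ n) {u v : Fin n} (huv : ¬((u : ℕ) = 0 ∧ (v : ℕ) = n - 1))
    (k : ℕ) : HasDist (thetaArc n) u v k ↔ (v : ℕ) = u + k := by
  simp only [HasDist, walkLen_thetaArc_iff hn, huv, and_false, or_false]
  exact ⟨And.left, fun h => ⟨h, fun m hm h' => by omega⟩⟩

theorem inDNbhd_thetaArc_iff (hn : 2 ≤ n) (D : Set ℕ) {u v : Fin n}
    (huv : ¬((u : ℕ) = 0 ∧ (v : ℕ) = n - 1)) :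
    InDNbhd (thetaArc n) D u v ↔ (u : ℕ) ≤ v ∧ (v : ℕ) - u ∈ D := by
  simp only [InDNbhd, hasDist_thetaArc_iff hn huv]
  constructor
  · rintro ⟨k, hk, h⟩
    exact ⟨by omega, by rwa [h, Nat.add_sub_cancel_left]⟩
  · rintro ⟨h, hD⟩
    exact ⟨_, hD, by omega⟩

theorem not_inDNbhd_thetaArc_of_le (hn : 3 ≤ n) {D : Set ℕ} (h0 : 0 ∉ D) (h1 : 1 ∉ D)
    {u : Fin n} (hu : n - 2 ≤ u) (v : Fin n) : ¬InDNbhd (thetaArc n) D u v := by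
  rw [inDNbhd_thetaArc_iff (by omega) D (by omega)]
  rintro ⟨huv, hmem⟩
  obtain h | h : (v : ℕ) - u = 0 ∨ (v : ℕ) - u = 1 := by omega
  exacts [h0 (h ▸ hmem), h1 (h ▸ hmem)]

theorem strictAnti_dWeight_thetaArc {m : ℕ} (hm : 2 ≤ m) {D : Set ℕ} (hD : D.Nonempty)
    (hmin : sInf D ≤ 1) :
    StrictAnti (dWeight (thetaArc (m + 1)) D fun y => m + 1 - y) := by
  refine Fin.strictAnti_iff_succ_lt.2 fun i => ?_
  have hsucc (y : Fin (m + 1)) :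
      InDNbhd (thetaArc (m + 1)) D i.succ y ↔ (i : ℕ) + 1 ≤ y ∧ (y : ℕ) - (i + 1) ∈ D := by
    rw [inDNbhd_thetaArc_iff (by omega) D (by simp)]
    simp
  have hcast (y : Fin (m + 1)) (hy : ¬((i : ℕ) = 0 ∧ (y : ℕ) = m)) :
      InDNbhd (thetaArc (m + 1)) D i.castSucc y ↔ (i : ℕ) ≤ y ∧ (y : ℕ) - i ∈ D := by
    rw [inDNbhd_thetaArc_iff (by omega) D (by simpa using hy)]
    simp
  refine dWeight_lt_dWeight_of_injOn (fun y => ⟨y - 1, by omega⟩) ?_ ?_ ?_ ?_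
    ⟨⟨i + sInf D, by omega⟩, ?_⟩
  · intro y hy z hz hyz
    simp only [Set.mem_ofPred_eq, hsucc, Fin.ext_iff] at hy hz hyz ⊢
    omega
  · intro y hy
    rw [hsucc] at hy
    rw [hcast _ (by simp only; omega)]
    refine ⟨by simp only; omega, ?_⟩
    convert hy.2 using 1
    simp only
    omega
  · intro y hy
    rw [hsucc] at hy
    simp only
    omega
  · intro y
    omega
  · rw [hcast _ (by simp only; omega)]
    simpa using Nat.sInf_mem hD

end Theta

theorem theta_antimagic_iff_min_le_one_general (n : ℕ) (hn : 3 ≤ n) (D : Set ℕ)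
    (hD : D.Nonempty) :
    DAntimagic (Fin n) (thetaArc n) D ↔ sInf D ≤ 1 := by
  constructor
  · intro hA
    by_contra! hmin
    have h0 : 0 ∉ D := fun h => (Nat.sInf_le h).not_gt (by omega)
    have h1 : 1 ∉ D := fun h => (Nat.sInf_le h).not_gt (by omega)
    have hsame : (⟨n - 2, by omega⟩ : Fin n) = ⟨n - 1, by omega⟩ :=
      hA.eq_of_inDNbhd_iff fun y =>
        iff_of_false (not_inDNbhd_thetaArc_of_le hn h0 h1 le_rfl y)
          (not_inDNbhd_thetaArc_of_le hn h0 h1 (by simp only; omega) y)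
    simp only [Fin.mk.injEq] at hsame
    omega
  · intro hmin
    obtain ⟨m, rfl⟩ : ∃ m, n = m + 1 := ⟨n - 1, by omega⟩
    refine ⟨Fin.revPerm.trans (finCongr (Fintype.card_fin _).symm), ?_⟩
    convert (strictAnti_dWeight_thetaArc (m := m) (by omega) hD hmin).injective using 3 with y
    simp only [Equiv.trans_apply, Fin.revPerm_apply, finCongr_apply, Fin.val_cast, Fin.val_rev]
    omega

/-- For `n ≥ 3` and a nonempty `D ⊆ {0, …, n-2}`, the Θ-oriented cycle
`C⃗_n` is `D`-antimagic iff `min D ≤ 1`. -/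
theorem theta_antimagic_iff_min_le_one (n : ℕ) (hn : 3 ≤ n) (D : Set ℕ)
    (hD : D.Nonempty) (hsub : D ⊆ {m : ℕ | m ≤ n - 2}) :
    DAntimagic (Fin n) (thetaArc n) D ↔ sInf D ≤ 1 :=
  theta_antimagic_iff_min_le_one_general n hn D hD
end
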